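/- arXiv:2006.16744 — 4 statements merged into one kernel-verified Lean document; each statement's English description precedes it below -/
import Mathlib

section
/- Leave-one-out stability of kernel ridge regression: with ĝ the KRR estimator trained on all N+1 observations with effective regularization λN/(N+1) and f̂₍ᵢ₎ the estimator trained on the N observations excluding (xᵢ,yᵢ), one has ‖f̂₍ᵢ₎ − ĝ‖_K ≤ (κ/(Nλ)) |ĝ(xᵢ) − yᵢ|. -/
/-!
Write `R_S` for the regularized empirical risk `a ∑_{j ∈ S} (⟪f, K_{x_j}⟫ - y_j)² + λ ‖f‖²` and
`Q_S` for its quadratic part (the same risk with all responses set to zero). Since `R_S` is a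
quadratic functional, its minimizer `g` satisfies the exact identity `R_S (g + h) = R_S g + Q_S h`.
Applying this to the full minimizer `ĝ` in the direction `f̂₍ᵢ₎ - ĝ` and to the leave-one-out
minimizer `f̂₍ᵢ₎` in the opposite direction, and adding, everything cancels except
`Q_{S∖i} (f̂₍ᵢ₎ - ĝ) = a (ĝ(xᵢ) - yᵢ) ⟪f̂₍ᵢ₎ - ĝ, K_{xᵢ}⟫`.
The left side is at least `λ ‖f̂₍ᵢ₎ - ĝ‖²` and the right side at most
`a |ĝ(xᵢ) - yᵢ| κ ‖f̂₍ᵢ₎ - ĝ‖`; take `a = 1/N`.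
-/

open Finset
open scoped RealInnerProductSpace

namespace KernelRidge

variable {H : Type*} [NormedAddCommGroup H] [InnerProductSpace ℝ H] {ι : Type*}

def regRisk (S : Finset ι) (Kx : ι → H) (y : ι → ℝ) (a lam : ℝ) (f : H) : ℝ :=
  a * ∑ j ∈ S, (⟪f, Kx j⟫ - y j) ^ 2 + lam * ‖f‖ ^ 2

variable {S : Finset ι} {Kx : ι → H} {y : ι → ℝ} {a lam : ℝ}

lemma regRisk_zero_neg (h : H) : regRisk S Kx 0 a lam (-h) = regRisk S Kx 0 a lam h := by
  simp [regRisk]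

lemma regRisk_eq_regRisk_erase_add [DecidableEq ι] {i : ι} (hi : i ∈ S) (f : H) :
    regRisk S Kx y a lam f =
      regRisk (S.erase i) Kx y a lam f + a * (⟪f, Kx i⟫ - y i) ^ 2 := by
  rw [regRisk, regRisk, ← sum_erase_add S _ hi]
  ring

lemma regRisk_add_smul (g h : H) (s : ℝ) :
    regRisk S Kx y a lam (g + s • h) =
      regRisk S Kx y a lam g
        + 2 * (a * ∑ j ∈ S, (⟪g, Kx j⟫ - y j) * ⟪h, Kx j⟫ + lam * ⟪g, h⟫) * s
        + regRisk S Kx 0 a lam h * s ^ 2 := by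
  have hsum : ∀ j ∈ S, (⟪g + s • h, Kx j⟫ - y j) ^ 2 =
      (⟪g, Kx j⟫ - y j) ^ 2 + 2 * s * ((⟪g, Kx j⟫ - y j) * ⟪h, Kx j⟫)
        + s ^ 2 * (⟪h, Kx j⟫ - 0) ^ 2 := fun j _ => by
    rw [inner_add_left, real_inner_smul_left]
    ring
  have hnorm : ‖g + s • h‖ ^ 2 = ‖g‖ ^ 2 + 2 * s * ⟪g, h⟫ + s ^ 2 * ‖h‖ ^ 2 := by
    rw [norm_add_sq_real, real_inner_smul_right, norm_smul, mul_pow, Real.norm_eq_abs, sq_abs]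
    ring
  simp only [regRisk, sum_congr rfl hsum, sum_add_distrib, ← mul_sum, hnorm, Pi.zero_apply]
  ring

/-- At a minimizer the linear term of `regRisk_add_smul` vanishes, since `s ↦ B s + C s²` is then
nonnegative, so its discriminant `B²` is nonpositive. -/
lemma regRisk_add_eq_of_forall_le {g : H}
    (hg : ∀ f, regRisk S Kx y a lam g ≤ regRisk S Kx y a lam f) (h : H) :
    regRisk S Kx y a lam (g + h) = regRisk S Kx y a lam g + regRisk S Kx 0 a lam h := by
  set B := 2 * (a * ∑ j ∈ S, (⟪g, Kx j⟫ - y j) * ⟪h, Kx j⟫ + lam * ⟪g, h⟫) with hB_def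
  have hdiscr : discrim (regRisk S Kx 0 a lam h) B 0 ≤ 0 := discrim_le_zero fun s => by
    have := hg (g + s • h)
    rw [regRisk_add_smul] at this
    linarith
  have hB : B = 0 := by
    rw [discrim] at hdiscr
    nlinarith [sq_nonneg B]
  have hexpand := regRisk_add_smul (S := S) (Kx := Kx) (y := y) (a := a) (lam := lam) g h 1
  rw [one_smul, ← hB_def, hB] at hexpand
  simpa using hexpand

lemma regRisk_erase_sub_eq [DecidableEq ι] {i : ι} (hi : i ∈ S) {g f : H}
    (hg : ∀ f', regRisk S Kx y a lam g ≤ regRisk S Kx y a lam f')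
    (hf : ∀ f', regRisk (S.erase i) Kx y a lam f ≤ regRisk (S.erase i) Kx y a lam f') :
    regRisk (S.erase i) Kx 0 a lam (f - g) = a * (⟪g, Kx i⟫ - y i) * ⟪f - g, Kx i⟫ := by
  have hfull := regRisk_add_eq_of_forall_le hg (f - g)
  have hloo := regRisk_add_eq_of_forall_le hf (g - f)
  rw [add_sub_cancel] at hfull hloo
  rw [← neg_sub, regRisk_zero_neg] at hloo
  rw [regRisk_eq_regRisk_erase_add hi f, regRisk_eq_regRisk_erase_add hi g,
    regRisk_eq_regRisk_erase_add hi (f - g)] at hfull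
  have hfi : ⟪f, Kx i⟫ = ⟪g, Kx i⟫ + ⟪f - g, Kx i⟫ := by
    rw [inner_sub_left]
    ring
  rw [hfi, Pi.zero_apply, sub_zero] at hfull
  linarith

lemma mul_norm_sub_le_of_forall_le [DecidableEq ι] {i : ι} (hi : i ∈ S) {g f : H} {κ : ℝ}
    (ha : 0 ≤ a) (hκ : ‖Kx i‖ ≤ κ)
    (hg : ∀ f', regRisk S Kx y a lam g ≤ regRisk S Kx y a lam f')
    (hf : ∀ f', regRisk (S.erase i) Kx y a lam f ≤ regRisk (S.erase i) Kx y a lam f') :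
    lam * ‖f - g‖ ≤ a * κ * |⟪g, Kx i⟫ - y i| := by
  set b := ⟪g, Kx i⟫ - y i
  have hinner : |⟪f - g, Kx i⟫| ≤ κ * ‖f - g‖ :=
    (abs_real_inner_le_norm _ _).trans (by rw [mul_comm]; gcongr)
  have hsq : lam * ‖f - g‖ * ‖f - g‖ ≤ a * κ * |b| * ‖f - g‖ :=
    calc lam * ‖f - g‖ * ‖f - g‖ ≤ regRisk (S.erase i) Kx 0 a lam (f - g) := by
          rw [mul_assoc, ← sq]
          exact le_add_of_nonneg_left (mul_nonneg ha (sum_nonneg fun _ _ => sq_nonneg _))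
      _ = a * (b * ⟪f - g, Kx i⟫) := by rw [regRisk_erase_sub_eq hi hg hf, mul_assoc]
      _ ≤ a * (|b| * |⟪f - g, Kx i⟫|) := by
          rw [← abs_mul]
          gcongr
          exact le_abs_self _
      _ ≤ a * (|b| * (κ * ‖f - g‖)) := by gcongr
      _ = a * κ * |b| * ‖f - g‖ := by ring
  rcases (norm_nonneg (f - g)).eq_or_lt with h0 | h0
  · rw [← h0, mul_zero]
    have : 0 ≤ κ := (norm_nonneg _).trans hκ
    positivity
  · exact le_of_mul_le_mul_right hsq h0

end KernelRidge

open KernelRidge in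
theorem stmt_9_general {H : Type*} [NormedAddCommGroup H] [InnerProductSpace ℝ H]
    (N : ℕ)
    (Kx : Fin (N + 1) → H) (y : Fin (N + 1) → ℝ)
    (κ : ℝ) (hκ : ∀ j, ‖Kx j‖ ≤ κ)
    (lam : ℝ) (hlam : 0 < lam)
    (ghat : H) (i : Fin (N + 1)) (fi : H)
    (hghat : ∀ f : H,
      (1 / N : ℝ) * ∑ j, ((inner ℝ ghat (Kx j) : ℝ) - y j) ^ 2 + lam * ‖ghat‖ ^ 2 ≤
        (1 / N : ℝ) * ∑ j, ((inner ℝ f (Kx j) : ℝ) - y j) ^ 2 + lam * ‖f‖ ^ 2)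
    (hfi : ∀ f : H,
      (1 / N : ℝ) * ∑ j ∈ Finset.univ.erase i, ((inner ℝ fi (Kx j) : ℝ) - y j) ^ 2
          + lam * ‖fi‖ ^ 2 ≤
        (1 / N : ℝ) * ∑ j ∈ Finset.univ.erase i, ((inner ℝ f (Kx j) : ℝ) - y j) ^ 2
          + lam * ‖f‖ ^ 2) :
    ‖fi - ghat‖ ≤ κ / (N * lam) * |(inner ℝ ghat (Kx i) : ℝ) - y i| := by
  have hbound := mul_norm_sub_le_of_forall_le (S := univ) (Kx := Kx) (y := y)
    (a := 1 / N) (g := ghat) (f := fi) (mem_univ i) (by positivity) (hκ i) hghat hfi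
  calc ‖fi - ghat‖ = lam * ‖fi - ghat‖ / lam := by field_simp
    _ ≤ 1 / N * κ * |inner ℝ ghat (Kx i) - y i| / lam := by gcongr
    _ = κ / (N * lam) * |inner ℝ ghat (Kx i) - y i| := by ring

/-- Leave-one-out stability of KRR: given `N+1` observations, with `ĝ` the KRR estimator
trained on all of them (objective `(1/N)∑_{j=1}^{N+1}(f(x_j)−y_j)² + λ‖f‖²_K`, i.e.
effective regularization `Nλ/(N+1)`) and `f̂₍ᵢ₎` the estimator trained on the `N`
observations excluding the `i`-th, one has
`‖f̂₍ᵢ₎ − ĝ‖_K ≤ (κ/(Nλ)) |ĝ(xᵢ) − yᵢ|`.  The RKHS is modeled by a Hilbert space `H`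
with feature vectors `Kx j = K(x_j, ·)` so that `f(x_j) = ⟪f, Kx j⟫` and
`‖Kx j‖ = √K(x_j,x_j) ≤ κ`. -/
theorem stmt_9 {H : Type*} [NormedAddCommGroup H] [InnerProductSpace ℝ H]
    (N : ℕ) (hN : 0 < N)
    (Kx : Fin (N + 1) → H) (y : Fin (N + 1) → ℝ)
    (κ : ℝ) (hκ : ∀ j, ‖Kx j‖ ≤ κ)
    (lam : ℝ) (hlam : 0 < lam)
    (ghat : H) (i : Fin (N + 1)) (fi : H)
    (hghat : ∀ f : H,
      (1 / N : ℝ) * ∑ j, ((inner ℝ ghat (Kx j) : ℝ) - y j) ^ 2 + lam * ‖ghat‖ ^ 2 ≤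
        (1 / N : ℝ) * ∑ j, ((inner ℝ f (Kx j) : ℝ) - y j) ^ 2 + lam * ‖f‖ ^ 2)
    (hfi : ∀ f : H,
      (1 / N : ℝ) * ∑ j ∈ Finset.univ.erase i, ((inner ℝ fi (Kx j) : ℝ) - y j) ^ 2
          + lam * ‖fi‖ ^ 2 ≤
        (1 / N : ℝ) * ∑ j ∈ Finset.univ.erase i, ((inner ℝ f (Kx j) : ℝ) - y j) ^ 2
          + lam * ‖f‖ ^ 2) :
    ‖fi - ghat‖ ≤ κ / (N * lam) * |(inner ℝ ghat (Kx i) : ℝ) - y i| :=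
  stmt_9_general N Kx y κ hκ lam hlam ghat i fi hghat hfi
end

section
/- Leave-one-out stability of bias-corrected kernel ridge regression: ‖f̂₍ᵢ₎^♯ − ĝ^♯‖_K ≤ (κ/(Nλ))( |ĝ(xᵢ) − yᵢ| + |ĝ^♯(xᵢ) − yᵢ| ) for all 1 ≤ i ≤ N+1. -/
/-!
Both pairs of estimators are minimizers of the same kind of convex quadratic
risk, over the full sample and over the sample without `xᵢ`, with centers `c` and `c'`.
Subtracting the two first-order conditions, tested in the direction `d = v − u` of the
difference of the minimizers, gives
`a ∑_{j ≠ i} ⟪d, K_{x_j}⟫² + λ‖d‖² = a (u(xᵢ) − yᵢ) d(xᵢ) + λ⟪c' − c, d⟫`,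
hence `λ‖d‖ ≤ a κ |u(xᵢ) − yᵢ| + λ‖c' − c‖`. Applied to `(ĝ, f̂₍ᵢ₎)` with centers `0`
and then to `(ĝ♯, f̂₍ᵢ₎♯)` with centers `ĝ` and `f̂₍ᵢ₎`, the two bounds chain.
-/

open Finset RealInnerProductSpace

section Ridge

variable {H : Type*} [NormedAddCommGroup H] [InnerProductSpace ℝ H] {ι : Type*}

noncomputable def ridgeRisk (T : Finset ι) (Kx : ι → H) (y : ι → ℝ) (a lam : ℝ) (c f : H) : ℝ :=
  a * ∑ j ∈ T, (⟪f, Kx j⟫ - y j) ^ 2 + lam * ‖f - c‖ ^ 2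

variable {T : Finset ι} {Kx : ι → H} {y : ι → ℝ} {a lam : ℝ} {c u : H}

lemma ridgeRisk_add_smul (u h : H) (t : ℝ) :
    ridgeRisk T Kx y a lam c (u + t • h) =
      (a * ∑ j ∈ T, ⟪h, Kx j⟫ ^ 2 + lam * ‖h‖ ^ 2) * (t * t)
        + 2 * (a * ∑ j ∈ T, (⟪u, Kx j⟫ - y j) * ⟪h, Kx j⟫ + lam * ⟪u - c, h⟫) * t
        + ridgeRisk T Kx y a lam c u := by
  have hsum : ∑ j ∈ T, (⟪u + t • h, Kx j⟫ - y j) ^ 2 =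
      ∑ j ∈ T, ⟪h, Kx j⟫ ^ 2 * (t * t)
        + 2 * ∑ j ∈ T, (⟪u, Kx j⟫ - y j) * ⟪h, Kx j⟫ * t
        + ∑ j ∈ T, (⟪u, Kx j⟫ - y j) ^ 2 := by
    rw [mul_sum, ← sum_add_distrib, ← sum_add_distrib]
    refine sum_congr rfl fun j _ => ?_
    rw [inner_add_left, real_inner_smul_left]
    ring
  have hnorm : ‖u + t • h - c‖ ^ 2 = ‖h‖ ^ 2 * (t * t) + 2 * ⟪u - c, h⟫ * t + ‖u - c‖ ^ 2 := by
    rw [show u + t • h - c = (u - c) + t • h by abel, norm_add_sq_real, real_inner_smul_right,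
      norm_smul, Real.norm_eq_abs, mul_pow, sq_abs]
    ring
  rw [ridgeRisk, ridgeRisk, hsum, hnorm, ← sum_mul, ← sum_mul]
  ring

lemma ridgeRisk_gradient_eq_zero
    (hu : ∀ f, ridgeRisk T Kx y a lam c u ≤ ridgeRisk T Kx y a lam c f) (h : H) :
    a * ∑ j ∈ T, (⟪u, Kx j⟫ - y j) * ⟪h, Kx j⟫ + lam * ⟪u - c, h⟫ = 0 := by
  -- `t ↦ risk (u + t • h) - risk u` is a nonnegative quadratic vanishing at `0`
  have hdiscrim := discrim_le_zero (c := 0)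
    (a := a * ∑ j ∈ T, ⟪h, Kx j⟫ ^ 2 + lam * ‖h‖ ^ 2)
    (b := 2 * (a * ∑ j ∈ T, (⟪u, Kx j⟫ - y j) * ⟪h, Kx j⟫ + lam * ⟪u - c, h⟫)) fun t => by
    have := hu (u + t • h)
    rw [ridgeRisk_add_smul] at this
    linarith
  rw [discrim] at hdiscrim
  nlinarith

lemma ridgeRisk_loo_identity [DecidableEq ι] {i : ι} {c' v : H} (hi : i ∈ T)
    (hu : ∀ f, ridgeRisk T Kx y a lam c u ≤ ridgeRisk T Kx y a lam c f)
    (hv : ∀ f, ridgeRisk (T.erase i) Kx y a lam c' v ≤ ridgeRisk (T.erase i) Kx y a lam c' f) :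
    a * ∑ j ∈ T.erase i, ⟪v - u, Kx j⟫ ^ 2 + lam * ‖v - u‖ ^ 2 =
      a * (⟪u, Kx i⟫ - y i) * ⟪v - u, Kx i⟫ + lam * ⟪c' - c, v - u⟫ := by
  have hgu := ridgeRisk_gradient_eq_zero hu (v - u)
  have hgv := ridgeRisk_gradient_eq_zero hv (v - u)
  rw [← add_sum_erase T _ hi] at hgu
  have hsum : ∑ j ∈ T.erase i, ⟪v - u, Kx j⟫ ^ 2 =
      ∑ j ∈ T.erase i, (⟪v, Kx j⟫ - y j) * ⟪v - u, Kx j⟫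
        - ∑ j ∈ T.erase i, (⟪u, Kx j⟫ - y j) * ⟪v - u, Kx j⟫ := by
    rw [← sum_sub_distrib]
    refine sum_congr rfl fun j _ => ?_
    rw [inner_sub_left]
    ring
  have hinner : ⟪v - c', v - u⟫ - ⟪u - c, v - u⟫ = ‖v - u‖ ^ 2 - ⟪c' - c, v - u⟫ := by
    rw [← inner_sub_left, ← real_inner_self_eq_norm_sq, ← inner_sub_left]
    congr 1
    abel
  linear_combination hgv - hgu + a * hsum - lam * hinner

lemma ridgeRisk_loo_stability [DecidableEq ι] {i : ι} {c' v : H} {κ : ℝ} (ha : 0 ≤ a)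
    (hlam : 0 < lam) (hκ : ‖Kx i‖ ≤ κ) (hi : i ∈ T)
    (hu : ∀ f, ridgeRisk T Kx y a lam c u ≤ ridgeRisk T Kx y a lam c f)
    (hv : ∀ f, ridgeRisk (T.erase i) Kx y a lam c' v ≤ ridgeRisk (T.erase i) Kx y a lam c' f) :
    lam * ‖v - u‖ ≤ a * κ * |⟪u, Kx i⟫ - y i| + lam * ‖c' - c‖ := by
  set d := v - u
  set r := ⟪u, Kx i⟫ - y i
  have hpoint : r * ⟪d, Kx i⟫ ≤ κ * |r| * ‖d‖ :=
    calc r * ⟪d, Kx i⟫ ≤ |r| * |⟪d, Kx i⟫| := by rw [← abs_mul]; exact le_abs_self _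
      _ ≤ |r| * (‖d‖ * κ) := by
        gcongr
        exact (abs_real_inner_le_norm d (Kx i)).trans (by gcongr)
      _ = κ * |r| * ‖d‖ := by ring
  have hsq : lam * ‖d‖ ^ 2 ≤ (a * κ * |r| + lam * ‖c' - c‖) * ‖d‖ := by
    have hdata : 0 ≤ a * ∑ j ∈ T.erase i, ⟪d, Kx j⟫ ^ 2 :=
      mul_nonneg ha (sum_nonneg fun j _ => sq_nonneg _)
    have := ridgeRisk_loo_identity hi hu hv
    nlinarith [mul_le_mul_of_nonneg_left hpoint ha,
      mul_le_mul_of_nonneg_left (real_inner_le_norm (c' - c) d) hlam.le]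
  have hκ0 : 0 ≤ κ := (norm_nonneg _).trans hκ
  rcases (norm_nonneg d).eq_or_lt with hd | hd
  · rw [← hd, mul_zero]
    positivity
  · nlinarith

end Ridge

theorem stmt_10_general {H : Type*} [NormedAddCommGroup H] [InnerProductSpace ℝ H]
    (N : ℕ)
    (Kx : Fin (N + 1) → H) (y : Fin (N + 1) → ℝ)
    (κ : ℝ) (hκ : ∀ j, ‖Kx j‖ ≤ κ)
    (lam : ℝ) (hlam : 0 < lam)
    (i : Fin (N + 1)) (ghat fi gsharp fisharp : H)
    (hghat : ∀ f : H,
      (1 / N : ℝ) * ∑ j, ((inner ℝ ghat (Kx j) : ℝ) - y j) ^ 2 + lam * ‖ghat‖ ^ 2 ≤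
        (1 / N : ℝ) * ∑ j, ((inner ℝ f (Kx j) : ℝ) - y j) ^ 2 + lam * ‖f‖ ^ 2)
    (hfi : ∀ f : H,
      (1 / N : ℝ) * ∑ j ∈ Finset.univ.erase i, ((inner ℝ fi (Kx j) : ℝ) - y j) ^ 2
          + lam * ‖fi‖ ^ 2 ≤
        (1 / N : ℝ) * ∑ j ∈ Finset.univ.erase i, ((inner ℝ f (Kx j) : ℝ) - y j) ^ 2
          + lam * ‖f‖ ^ 2)
    (hgsharp : ∀ f : H,
      (1 / N : ℝ) * ∑ j, ((inner ℝ gsharp (Kx j) : ℝ) - y j) ^ 2 + lam * ‖gsharp - ghat‖ ^ 2 ≤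
        (1 / N : ℝ) * ∑ j, ((inner ℝ f (Kx j) : ℝ) - y j) ^ 2 + lam * ‖f - ghat‖ ^ 2)
    (hfisharp : ∀ f : H,
      (1 / N : ℝ) * ∑ j ∈ Finset.univ.erase i, ((inner ℝ fisharp (Kx j) : ℝ) - y j) ^ 2
          + lam * ‖fisharp - fi‖ ^ 2 ≤
        (1 / N : ℝ) * ∑ j ∈ Finset.univ.erase i, ((inner ℝ f (Kx j) : ℝ) - y j) ^ 2
          + lam * ‖f - fi‖ ^ 2) :
    ‖fisharp - gsharp‖ ≤
      κ / (N * lam) *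
        (|(inner ℝ ghat (Kx i) : ℝ) - y i| + |(inner ℝ gsharp (Kx i) : ℝ) - y i|) := by
  have ha : (0 : ℝ) ≤ 1 / N := by positivity
  have hplain := ridgeRisk_loo_stability (c := 0) (c' := 0) ha hlam (hκ i) (mem_univ i)
    (fun f => by simpa [ridgeRisk] using hghat f) (fun f => by simpa [ridgeRisk] using hfi f)
  have hsharp := ridgeRisk_loo_stability ha hlam (hκ i) (mem_univ i) hgsharp hfisharp
  rw [sub_self, norm_zero, mul_zero, add_zero] at hplain
  rw [show κ / (N * lam) * (|⟪ghat, Kx i⟫ - y i| + |⟪gsharp, Kx i⟫ - y i|) =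
      (1 / N * κ * |⟪ghat, Kx i⟫ - y i| + 1 / N * κ * |⟪gsharp, Kx i⟫ - y i|) / lam by ring,
    le_div_iff₀ hlam]
  linarith

/-- Leave-one-out stability of bias-corrected KRR: with `ĝ`, `f̂₍ᵢ₎` the full-sample and
leave-one-out KRR estimators and `ĝ♯`, `f̂₍ᵢ₎♯` the corresponding bias-corrected
(recentered) estimators, one has
`‖f̂₍ᵢ₎♯ − ĝ♯‖_K ≤ (κ/(Nλ))(|ĝ(xᵢ) − yᵢ| + |ĝ♯(xᵢ) − yᵢ|)`.  The RKHS is modeled by a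
Hilbert space `H` with feature vectors `Kx j`, so `f(x_j) = ⟪f, Kx j⟫` and `‖Kx j‖ ≤ κ`. -/
theorem stmt_10 {H : Type*} [NormedAddCommGroup H] [InnerProductSpace ℝ H]
    (N : ℕ) (hN : 0 < N)
    (Kx : Fin (N + 1) → H) (y : Fin (N + 1) → ℝ)
    (κ : ℝ) (hκ : ∀ j, ‖Kx j‖ ≤ κ)
    (lam : ℝ) (hlam : 0 < lam)
    (i : Fin (N + 1)) (ghat fi gsharp fisharp : H)
    (hghat : ∀ f : H,
      (1 / N : ℝ) * ∑ j, ((inner ℝ ghat (Kx j) : ℝ) - y j) ^ 2 + lam * ‖ghat‖ ^ 2 ≤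
        (1 / N : ℝ) * ∑ j, ((inner ℝ f (Kx j) : ℝ) - y j) ^ 2 + lam * ‖f‖ ^ 2)
    (hfi : ∀ f : H,
      (1 / N : ℝ) * ∑ j ∈ Finset.univ.erase i, ((inner ℝ fi (Kx j) : ℝ) - y j) ^ 2
          + lam * ‖fi‖ ^ 2 ≤
        (1 / N : ℝ) * ∑ j ∈ Finset.univ.erase i, ((inner ℝ f (Kx j) : ℝ) - y j) ^ 2
          + lam * ‖f‖ ^ 2)
    (hgsharp : ∀ f : H,
      (1 / N : ℝ) * ∑ j, ((inner ℝ gsharp (Kx j) : ℝ) - y j) ^ 2 + lam * ‖gsharp - ghat‖ ^ 2 ≤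
        (1 / N : ℝ) * ∑ j, ((inner ℝ f (Kx j) : ℝ) - y j) ^ 2 + lam * ‖f - ghat‖ ^ 2)
    (hfisharp : ∀ f : H,
      (1 / N : ℝ) * ∑ j ∈ Finset.univ.erase i, ((inner ℝ fisharp (Kx j) : ℝ) - y j) ^ 2
          + lam * ‖fisharp - fi‖ ^ 2 ≤
        (1 / N : ℝ) * ∑ j ∈ Finset.univ.erase i, ((inner ℝ f (Kx j) : ℝ) - y j) ^ 2
          + lam * ‖f - fi‖ ^ 2) :
    ‖fisharp - gsharp‖ ≤
      κ / (N * lam) *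
        (|(inner ℝ ghat (Kx i) : ℝ) - y i| + |(inner ℝ gsharp (Kx i) : ℝ) - y i|) :=
  stmt_10_general N Kx y κ hκ lam hlam i ghat fi gsharp fisharp hghat hfi hgsharp hfisharp
end

section
/- Fitting-the-residuals characterization of bias-corrected KRR: if rᵢ = yᵢ − f_{D,λ}(xᵢ) are the KRR residuals and ĥ is the KRR estimator on the residual data {(xᵢ, rᵢ)}, then f^♯_{D,λ} := f_{D,λ} + λ(λI + (1/N)S*S)^{-1} f_{D,λ} equals f_{D,λ} + ĥ. -/
set_option maxHeartbeats 1000000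

open ContinuousLinearMap RealInnerProductSpace

/-- Fitting-the-residuals characterization of bias-corrected KRR: with
`f_{D,λ} = (1/N)(λI + (1/N)S*S)⁻¹ S*y` the KRR estimator, residuals
`rᵢ = yᵢ − f_{D,λ}(xᵢ)`, and `ĥ` the KRR estimator fitted to the residual data, the
bias-corrected estimator `f♯ = f_{D,λ} + λ(λI + (1/N)S*S)⁻¹ f_{D,λ}` equals
`f_{D,λ} + ĥ`. -/
theorem stmt_11 {H : Type*} [NormedAddCommGroup H] [InnerProductSpace ℝ H] [CompleteSpace H]
    (N : ℕ) (hN : 0 < N)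
    (S : H →L[ℝ] EuclideanSpace ℝ (Fin N)) (y : EuclideanSpace ℝ (Fin N))
    (lam : ℝ) (hlam : 0 < lam) (fD hhat : H)
    (hfD : fD = (1 / N : ℝ) •
      (Ring.inverse (lam • (1 : H →L[ℝ] H)
          + (1 / N : ℝ) • ((ContinuousLinearMap.adjoint S).comp S)))
        (ContinuousLinearMap.adjoint S y))
    (hhat_min : ∀ g : H,
      (1 / N : ℝ) * ∑ i, ((y i - S fD i) - S hhat i) ^ 2 + lam * ‖hhat‖ ^ 2 ≤
        (1 / N : ℝ) * ∑ i, ((y i - S fD i) - S g i) ^ 2 + lam * ‖g‖ ^ 2) :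
    fD + lam • (Ring.inverse (lam • (1 : H →L[ℝ] H)
        + (1 / N : ℝ) • ((ContinuousLinearMap.adjoint S).comp S))) fD
      = fD + hhat := by
  have hNpos : (0:ℝ) < (N:ℝ) := by exact_mod_cast hN
  set A : H →L[ℝ] H := lam • (1 : H →L[ℝ] H)
      + (1 / N : ℝ) • ((ContinuousLinearMap.adjoint S).comp S) with hA
  have hApp : ∀ v : H, A v = lam • v + (1 / N : ℝ) • (ContinuousLinearMap.adjoint S (S v)) := by
    intro v; simp [hA]
  have hBform : ∀ v w : H, ⟪A v, w⟫ = lam * ⟪v, w⟫ + (1 / N : ℝ) * ⟪S v, S w⟫ := by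
    intro v w
    rw [hApp, inner_add_left, real_inner_smul_left, real_inner_smul_left,
      ContinuousLinearMap.adjoint_inner_left]
  have hsymm : ∀ v w : H, ⟪A v, w⟫ = ⟪A w, v⟫ := by
    intro v w
    rw [hBform, hBform, real_inner_comm v w, real_inner_comm (S v) (S w)]
  have hcoer : ∀ v : H, lam * ‖v‖ ^ 2 ≤ ⟪A v, v⟫ := by
    intro v
    rw [hBform, real_inner_self_eq_norm_sq, real_inner_self_eq_norm_sq]
    have : (0:ℝ) ≤ (1 / N : ℝ) * ‖S v‖ ^ 2 := by positivity
    linarith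
  -- A is a unit via Lax–Milgram
  have hunit : IsUnit A := by
    set B : H →L[ℝ] H →L[ℝ] ℝ := (innerSL ℝ).comp A with hB
    have hBapp : ∀ v w : H, B v w = ⟪A v, w⟫ := fun v w => rfl
    have coer : IsCoercive B := by
      refine ⟨lam, hlam, fun v => ?_⟩
      rw [hBapp]
      have := hcoer v
      nlinarith [this, sq_nonneg ‖v‖]
    set e := coer.continuousLinearEquivOfBilin with he
    have heA : ∀ v : H, e v = A v := by
      intro v
      refine ext_inner_right ℝ fun w => ?_
      rw [coer.continuousLinearEquivOfBilin_apply, hBapp]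
    refine ⟨⟨A, e.symm.toContinuousLinearMap, ?_, ?_⟩, rfl⟩
    · ext v
      show A (e.symm v) = v
      rw [← heA]; exact e.apply_symm_apply v
    · ext v
      show e.symm (A v) = v
      rw [← heA]; exact e.symm_apply_apply v
  have hcan1 : ∀ x : H, A (Ring.inverse A x) = x := by
    intro x
    have h := Ring.mul_inverse_cancel A hunit
    have := DFunLike.congr_fun h x
    simpa [ContinuousLinearMap.mul_apply] using this
  have hcan2 : ∀ x : H, Ring.inverse A (A x) = x := by
    intro x
    have h := Ring.inverse_mul_cancel A hunit
    have := DFunLike.congr_fun h x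
    simpa [ContinuousLinearMap.mul_apply] using this
  -- residual and key identity
  set r : EuclideanSpace ℝ (Fin N) := y - S fD with hr
  have hAfD : A fD = (1 / N : ℝ) • ContinuousLinearMap.adjoint S y := by
    rw [hfD]; rw [map_smul]; rw [hcan1]
  have hkey : (1 / N : ℝ) • ContinuousLinearMap.adjoint S r = lam • fD := by
    have h1 : A fD = lam • fD + (1 / N : ℝ) • (ContinuousLinearMap.adjoint S (S fD)) := hApp fD
    rw [hr, map_sub, smul_sub, ← hAfD, h1]
    abel
  obtain ⟨hstar, hhs⟩ : ∃ h : H, h = Ring.inverse A (lam • fD) := ⟨_, rfl⟩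
  have hAhstar : A hstar = lam • fD := by rw [hhs]; exact hcan1 _
  -- rewrite sums as norms
  have hsum : ∀ v : EuclideanSpace ℝ (Fin N), ∑ i, (v i) ^ 2 = ‖v‖ ^ 2 := by
    intro v
    rw [EuclideanSpace.norm_eq, Real.sq_sqrt (by positivity)]
    simp [Real.norm_eq_abs, sq_abs]
  -- objective expansion
  have hobj : ∀ g : H, (1 / N : ℝ) * ∑ i, ((y i - S fD i) - S g i) ^ 2 + lam * ‖g‖ ^ 2
      = (1 / N : ℝ) * ‖r‖ ^ 2 - 2 * ⟪lam • fD, g⟫ + ⟪A g, g⟫ := by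
    intro g
    have h1 : ∀ i, (y i - S fD i) - S g i = (r - S g) i := by
      intro i; simp [hr]
    simp_rw [h1]
    rw [hsum, norm_sub_sq_real, hBform, real_inner_self_eq_norm_sq, real_inner_self_eq_norm_sq,
      ← hkey, real_inner_smul_left, ContinuousLinearMap.adjoint_inner_left]
    ring
  have hmin := hhat_min hstar
  rw [hobj hhat, hobj hstar] at hmin
  -- show hhat = hstar
  have hdiff : ⟪A (hhat - hstar), hhat - hstar⟫ ≤ 0 := by
    have e1 : ⟪A (hhat - hstar), hhat - hstar⟫
        = ⟪A hhat, hhat⟫ - 2 * ⟪A hstar, hhat⟫ + ⟪A hstar, hstar⟫ := by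
      rw [map_sub, inner_sub_left, inner_sub_right, inner_sub_right, hsymm hhat hstar]
      ring
    have e2 : ⟪lam • fD, hhat⟫ = ⟪A hstar, hhat⟫ := by rw [hAhstar]
    have e3 : ⟪lam • fD, hstar⟫ = ⟪A hstar, hstar⟫ := by rw [hAhstar]
    linarith [hmin, e1, e2, e3]
  have hz : hhat - hstar = 0 := by
    have := hcoer (hhat - hstar)
    have hn : ‖hhat - hstar‖ ^ 2 ≤ 0 := by nlinarith
    have : ‖hhat - hstar‖ = 0 := by nlinarith [norm_nonneg (hhat - hstar), sq_nonneg ‖hhat - hstar‖]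
    exact norm_eq_zero.mp this
  have hfinal : hhat = hstar := by
    have := sub_eq_zero.mp hz; exact this
  rw [hfinal, hhs, map_smul]
end

section
/- Recentering regularization characterization of bias-corrected KRR: the estimator f^♯_{D,λ} = f_{D,λ} + λ(λI + (1/N)S*S)^{-1} f_{D,λ} is the unique minimizer over H_K of (1/N)∑ᵢ(yᵢ − f(xᵢ))² + λ‖f − f_{D,λ}‖²_K. -/
/-!
Write `A = λ I + c S*S` with `c = 1/N`; it is invertible since `⟪A x, x⟫ ≥ λ ‖x‖²`.
Since `A f_{D,λ} = c S*y` and `A (f♯ - f_{D,λ}) = λ f_{D,λ}`, the bias-corrected estimator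
satisfies the normal equation `c S*(y - S f♯) = λ (f♯ - f_{D,λ})` of the recentered risk
`J f = c ‖y - S f‖² + λ ‖f - f_{D,λ}‖²`.
The cross terms then cancel in the expansion of `J f` around `f♯`, leaving
`J f = J f♯ + c ‖S (f - f♯)‖² + λ ‖f - f♯‖²`, and the last term is positive unless `f = f♯`.
-/

open RealInnerProductSpace ContinuousLinearMap

section

variable {H E : Type*} [NormedAddCommGroup H] [InnerProductSpace ℝ H] [CompleteSpace H]
  [NormedAddCommGroup E] [InnerProductSpace ℝ E] [CompleteSpace E]

lemma inner_smul_one_add_smul_adjoint_comp_self (S : H →L[ℝ] E) (lam c : ℝ) (x : H) :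
    ⟪(lam • (1 : H →L[ℝ] H) + c • (adjoint S).comp S) x, x⟫ =
      lam * ‖x‖ ^ 2 + c * ‖S x‖ ^ 2 := by
  simp only [add_apply, smul_apply, one_apply_eq_self, comp_apply, inner_add_left,
    real_inner_smul_left, adjoint_inner_left, real_inner_self_eq_norm_sq]

lemma isUnit_smul_one_add_smul_adjoint_comp_self (S : H →L[ℝ] E) {lam c : ℝ} (hlam : 0 < lam)
    (hc : 0 ≤ c) : IsUnit (lam • (1 : H →L[ℝ] H) + c • (adjoint S).comp S) := by
  refine isUnit_of_forall_le_norm_inner_map _ (c := lam.toNNReal) (by simpa using hlam) fun x ↦ ?_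
  rw [inner_smul_one_add_smul_adjoint_comp_self, Real.coe_toNNReal _ hlam.le,
    Real.norm_of_nonneg (by positivity)]
  have : 0 ≤ c * ‖S x‖ ^ 2 := by positivity
  linarith

lemma smul_one_add_smul_adjoint_comp_self_inverse_apply (S : H →L[ℝ] E) {lam c : ℝ}
    (hlam : 0 < lam) (hc : 0 ≤ c) (x : H) :
    (lam • (1 : H →L[ℝ] H) + c • (adjoint S).comp S)
      (Ring.inverse (lam • (1 : H →L[ℝ] H) + c • (adjoint S).comp S) x) = x := by
  rw [← mul_apply_eq_comp, Ring.mul_inverse_cancel _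
    (isUnit_smul_one_add_smul_adjoint_comp_self S hlam hc), one_apply_eq_self]

/-- If `A = λ I + c S*S` maps `g` to `c S*y`, then `u = g + λ A⁻¹ g` solves the normal equation
of `f ↦ c ‖y - S f‖² + λ ‖f - g‖²`. -/
lemma smul_adjoint_sub_eq_of_add_smul_inverse (S : H →L[ℝ] E) (y : E) {lam c : ℝ}
    (hlam : 0 < lam) (hc : 0 ≤ c) {g : H}
    (hg : (lam • (1 : H →L[ℝ] H) + c • (adjoint S).comp S) g = c • adjoint S y) :
    c • adjoint S
        (y - S (g + lam • Ring.inverse (lam • (1 : H →L[ℝ] H) + c • (adjoint S).comp S) g)) =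
      lam • (g + lam • Ring.inverse (lam • (1 : H →L[ℝ] H) + c • (adjoint S).comp S) g - g) := by
  have hAinv := smul_one_add_smul_adjoint_comp_self_inverse_apply S hlam hc g
  set A := lam • (1 : H →L[ℝ] H) + c • (adjoint S).comp S
  have hA : ∀ x, c • adjoint S (S x) = A x - lam • x := fun x ↦ by
    simp only [A, add_apply, smul_apply, one_apply_eq_self, comp_apply]
    abel
  rw [map_sub, smul_sub, ← hg, hA, map_add, map_smul, hAinv]
  module

lemma recenteredRisk_eq_add_of_normal_eq (S : H →L[ℝ] E) (y : E) {lam c : ℝ} {g u : H}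
    (hu : c • adjoint S (y - S u) = lam • (u - g)) (f : H) :
    c * ‖y - S f‖ ^ 2 + lam * ‖f - g‖ ^ 2 =
      (c * ‖y - S u‖ ^ 2 + lam * ‖u - g‖ ^ 2) +
        (c * ‖S (f - u)‖ ^ 2 + lam * ‖f - u‖ ^ 2) := by
  have hcross : c * ⟪y - S u, S (f - u)⟫ = lam * ⟪u - g, f - u⟫ := by
    rw [← real_inner_smul_left, ← adjoint_inner_left, ← real_inner_smul_left, map_smul, hu,
      real_inner_smul_left]
  have hres : y - S f = (y - S u) - S (f - u) := by rw [map_sub]; abel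
  have hcen : f - g = (u - g) + (f - u) := by abel
  rw [hres, hcen, norm_sub_sq_real, norm_add_sq_real]
  linarith

lemma recenteredRisk_unique_min_of_normal_eq (S : H →L[ℝ] E) (y : E) {lam c : ℝ} (hlam : 0 < lam)
    (hc : 0 ≤ c) {g u : H} (hu : c • adjoint S (y - S u) = lam • (u - g)) :
    (∀ f, c * ‖y - S u‖ ^ 2 + lam * ‖u - g‖ ^ 2 ≤
      c * ‖y - S f‖ ^ 2 + lam * ‖f - g‖ ^ 2) ∧
    (∀ f, c * ‖y - S f‖ ^ 2 + lam * ‖f - g‖ ^ 2 ≤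
      c * ‖y - S u‖ ^ 2 + lam * ‖u - g‖ ^ 2 → f = u) := by
  refine ⟨fun f ↦ ?_, fun f hf ↦ ?_⟩
  · rw [recenteredRisk_eq_add_of_normal_eq S y hu f]
    have : 0 ≤ c * ‖S (f - u)‖ ^ 2 + lam * ‖f - u‖ ^ 2 := by positivity
    linarith
  · rw [recenteredRisk_eq_add_of_normal_eq S y hu f] at hf
    have : 0 ≤ c * ‖S (f - u)‖ ^ 2 := by positivity
    have hzero : ‖f - u‖ ^ 2 ≤ 0 := nonpos_of_mul_nonpos_right (by linarith) hlam
    rw [← sub_eq_zero, ← norm_eq_zero]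
    exact pow_eq_zero_iff two_ne_zero |>.mp (le_antisymm hzero (by positivity))

end

theorem stmt_12_general {H : Type*} [NormedAddCommGroup H] [InnerProductSpace ℝ H] [CompleteSpace H]
    (N : ℕ)
    (S : H →L[ℝ] EuclideanSpace ℝ (Fin N)) (y : EuclideanSpace ℝ (Fin N))
    (lam : ℝ) (hlam : 0 < lam) (fD fsharp : H)
    (hfD : fD = (1 / N : ℝ) •
      (Ring.inverse (lam • (1 : H →L[ℝ] H)
          + (1 / N : ℝ) • ((ContinuousLinearMap.adjoint S).comp S)))
        (ContinuousLinearMap.adjoint S y))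
    (hfsharp : fsharp = fD + lam • (Ring.inverse (lam • (1 : H →L[ℝ] H)
        + (1 / N : ℝ) • ((ContinuousLinearMap.adjoint S).comp S))) fD) :
    (∀ f : H,
      (1 / N : ℝ) * ∑ i, (y i - S fsharp i) ^ 2 + lam * ‖fsharp - fD‖ ^ 2 ≤
        (1 / N : ℝ) * ∑ i, (y i - S f i) ^ 2 + lam * ‖f - fD‖ ^ 2) ∧
    (∀ f : H,
      (1 / N : ℝ) * ∑ i, (y i - S f i) ^ 2 + lam * ‖f - fD‖ ^ 2 ≤
        (1 / N : ℝ) * ∑ i, (y i - S fsharp i) ^ 2 + lam * ‖fsharp - fD‖ ^ 2 →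
      f = fsharp) := by
  have hc : (0 : ℝ) ≤ 1 / N := by positivity
  have hAfD : (lam • (1 : H →L[ℝ] H) + (1 / N : ℝ) • (adjoint S).comp S) fD =
      (1 / N : ℝ) • adjoint S y := by
    rw [hfD, map_smul, smul_one_add_smul_adjoint_comp_self_inverse_apply S hlam hc]
  have hnormal := smul_adjoint_sub_eq_of_add_smul_inverse S y hlam hc hAfD
  rw [← hfsharp] at hnormal
  have hsum : ∀ f : H, ∑ i, (y i - S f i) ^ 2 = ‖y - S f‖ ^ 2 := fun f ↦ by
    simp [EuclideanSpace.real_norm_sq_eq]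
  simp only [hsum]
  exact recenteredRisk_unique_min_of_normal_eq S y hlam hc hnormal

/-- Recentering-regularization characterization of bias-corrected KRR: the estimator
`f♯ = f_{D,λ} + λ(λI + (1/N)S*S)⁻¹ f_{D,λ}` is the unique minimizer over the RKHS of the
recentered regularized risk `(1/N)∑ᵢ(yᵢ − f(xᵢ))² + λ‖f − f_{D,λ}‖²_K`, where
`f_{D,λ} = (1/N)(λI + (1/N)S*S)⁻¹ S*y` is the KRR estimator and `S` the sampling
operator. -/
theorem stmt_12 {H : Type*} [NormedAddCommGroup H] [InnerProductSpace ℝ H] [CompleteSpace H]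
    (N : ℕ) (hN : 0 < N)
    (S : H →L[ℝ] EuclideanSpace ℝ (Fin N)) (y : EuclideanSpace ℝ (Fin N))
    (lam : ℝ) (hlam : 0 < lam) (fD fsharp : H)
    (hfD : fD = (1 / N : ℝ) •
      (Ring.inverse (lam • (1 : H →L[ℝ] H)
          + (1 / N : ℝ) • ((ContinuousLinearMap.adjoint S).comp S)))
        (ContinuousLinearMap.adjoint S y))
    (hfsharp : fsharp = fD + lam • (Ring.inverse (lam • (1 : H →L[ℝ] H)
        + (1 / N : ℝ) • ((ContinuousLinearMap.adjoint S).comp S))) fD) :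
    (∀ f : H,
      (1 / N : ℝ) * ∑ i, (y i - S fsharp i) ^ 2 + lam * ‖fsharp - fD‖ ^ 2 ≤
        (1 / N : ℝ) * ∑ i, (y i - S f i) ^ 2 + lam * ‖f - fD‖ ^ 2) ∧
    (∀ f : H,
      (1 / N : ℝ) * ∑ i, (y i - S f i) ^ 2 + lam * ‖f - fD‖ ^ 2 ≤
        (1 / N : ℝ) * ∑ i, (y i - S fsharp i) ^ 2 + lam * ‖fsharp - fD‖ ^ 2 →
      f = fsharp) :=
  stmt_12_general N S y lam hlam fD fsharp hfD hfsharp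
end
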